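/- Let J = diag(I_{p}, −I_{q}) be the (p+q)×(p+q) signature matrix, and let X, Y ∈ ℝ^{m×(p+q)} be matrices of full column rank p+q such that X J Xᵀ = Y J Yᵀ, where moreover X J Xᵀ has exactly p positive and q negative eigenvalues. Then there exists a matrix Q in the indefinite orthogonal group O(p,q) (i.e., Q J Qᵀ = J) such that Y = X Q. -/

import Mathlib

/-!
The eigenvalue count says that `H = X J Xᵀ` has rank `p + q`. As `H = X (J Xᵀ) = Y (J Yᵀ)`
and `X`, `Y` have only `p + q` columns, their column spaces both equal that of `H`, and `X`
has full column rank. Hence `Y = X Q` for some `Q`, and `X (Q J Qᵀ) Xᵀ = Y J Yᵀ = X J Xᵀ`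
cancels to `Q J Qᵀ = J`.
-/

open Matrix

namespace Matrix

variable {m n k : Type*} [Fintype n] [Fintype k] {K : Type*} [Field K]

lemma IsHermitian.rank_eq_card_pos_add_card_neg {𝕜 : Type*} [RCLike 𝕜]
    [DecidableEq n] {A : Matrix n n 𝕜} (hA : A.IsHermitian) :
    A.rank = (Finset.univ.filter fun i => 0 < hA.eigenvalues i).card +
      (Finset.univ.filter fun i => hA.eigenvalues i < 0).card := by
  rw [hA.rank_eq_card_non_zero_eigs, Fintype.card_subtype, ← Finset.card_union_of_disjoint
    (Finset.disjoint_filter.mpr fun _ _ hpos hneg => (lt_asymm hpos hneg).elim),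
    ← Finset.filter_or]
  simp only [ne_iff_lt_or_gt, or_comm]

lemma range_mulVecLin_eq_of_eq_mul_of_rank_eq {H : Matrix m k K} {X : Matrix m n K}
    {C : Matrix n k K} (hHXC : H = X * C) (hH : H.rank = Fintype.card n) :
    LinearMap.range H.mulVecLin = LinearMap.range X.mulVecLin := by
  refine Submodule.eq_of_le_of_finrank_le ?_ (X.rank_le_card_width.trans hH.ge)
  rw [hHXC, mulVecLin_mul]
  exact LinearMap.range_comp_le_range _ _

lemma exists_mul_eq_of_range_mulVecLin_le [DecidableEq k] {X : Matrix m n K} {Y : Matrix m k K}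
    (h : LinearMap.range Y.mulVecLin ≤ LinearMap.range X.mulVecLin) :
    ∃ Q : Matrix n k K, X * Q = Y := by
  have hcol : ∀ j, ∃ v, X *ᵥ v = Y.col j := fun j => h ⟨Pi.single j 1, by simp⟩
  choose c hc using hcol
  refine ⟨(of c)ᵀ, ext fun i j => ?_⟩
  simpa [mul_apply, mulVec, dotProduct] using congrFun (hc j) i

lemma mulVec_injective_of_rank_eq (X : Matrix m n K) (hX : X.rank = Fintype.card n) :
    Function.Injective X.mulVec := by
  rw [mulVec_injective_iff, linearIndependent_iff_card_eq_finrank_span, ← hX,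
    rank_eq_finrank_span_cols]
  rfl

lemma eq_of_mul_eq_mul_left_of_rank_eq (X : Matrix m n K) (hX : X.rank = Fintype.card n)
    {A B : Matrix n k K} (h : X * A = X * B) : A = B :=
  ext_iff_mulVec.mpr fun v => X.mulVec_injective_of_rank_eq hX <| by
    rw [mulVec_mulVec, mulVec_mulVec, h]

lemma eq_of_mul_mul_transpose_eq [Fintype m] (X : Matrix m n K) (hX : X.rank = Fintype.card n)
    {A B : Matrix n n K} (h : X * A * Xᵀ = X * B * Xᵀ) : A = B := by
  have hright : A * Xᵀ = B * Xᵀ :=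
    X.eq_of_mul_eq_mul_left_of_rank_eq hX (by simpa only [Matrix.mul_assoc] using h)
  have hleft : X * Aᵀ = X * Bᵀ := by
    simpa only [transpose_mul, transpose_transpose] using congrArg transpose hright
  exact transpose_injective (X.eq_of_mul_eq_mul_left_of_rank_eq hX hleft)

end Matrix

theorem exists_indefinite_orthogonal_of_eq_general {p q m : ℕ}
    (J : Matrix (Fin (p + q)) (Fin (p + q)) ℝ)
    (X Y : Matrix (Fin m) (Fin (p + q)) ℝ)
    (heq : X * J * Xᵀ = Y * J * Yᵀ)
    (hH : (X * J * Xᵀ).IsHermitian)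
    (hpos : (Finset.univ.filter fun i => 0 < hH.eigenvalues i).card = p)
    (hneg : (Finset.univ.filter fun i => hH.eigenvalues i < 0).card = q) :
    ∃ Q : Matrix (Fin (p + q)) (Fin (p + q)) ℝ,
      Q * J * Qᵀ = J ∧ Y = X * Q := by
  have hrank : (X * J * Xᵀ).rank = Fintype.card (Fin (p + q)) := by
    rw [hH.rank_eq_card_pos_add_card_neg, hpos, hneg, Fintype.card_fin]
  have hrangeX := range_mulVecLin_eq_of_eq_mul_of_rank_eq (Matrix.mul_assoc X J Xᵀ) hrank
  have hrangeY :=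
    range_mulVecLin_eq_of_eq_mul_of_rank_eq (heq.trans (Matrix.mul_assoc Y J Yᵀ)) hrank
  have hX : X.rank = Fintype.card (Fin (p + q)) := by rw [rank, ← hrangeX]; exact hrank
  obtain ⟨Q, hQ⟩ := exists_mul_eq_of_range_mulVecLin_le (hrangeY.symm.trans hrangeX).le
  refine ⟨Q, X.eq_of_mul_mul_transpose_eq hX ?_, hQ.symm⟩
  calc X * (Q * J * Qᵀ) * Xᵀ = X * Q * J * (X * Q)ᵀ := by
        simp only [transpose_mul, Matrix.mul_assoc]
    _ = X * J * Xᵀ := by rw [hQ, heq]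

/-- Indefinite analogue of the orthogonal alignment: if `X J Xᵀ = Y J Yᵀ` with
`J = diag(I_p, -I_q)`, `X`, `Y` of full column rank `p + q`, and `X J Xᵀ` has
exactly `p` positive and `q` negative eigenvalues, then `Y = X Q` for some `Q`
in the indefinite orthogonal group `O(p, q)`. -/
theorem exists_indefinite_orthogonal_of_eq {p q m : ℕ}
    (J : Matrix (Fin (p + q)) (Fin (p + q)) ℝ)
    (hJ : J = Matrix.diagonal (fun i : Fin (p + q) => if (i : ℕ) < p then (1 : ℝ) else -1))
    (X Y : Matrix (Fin m) (Fin (p + q)) ℝ)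
    (hX : X.rank = p + q) (hY : Y.rank = p + q)
    (heq : X * J * Xᵀ = Y * J * Yᵀ)
    (hH : (X * J * Xᵀ).IsHermitian)
    (hpos : (Finset.univ.filter fun i => 0 < hH.eigenvalues i).card = p)
    (hneg : (Finset.univ.filter fun i => hH.eigenvalues i < 0).card = q) :
    ∃ Q : Matrix (Fin (p + q)) (Fin (p + q)) ℝ,
      Q * J * Qᵀ = J ∧ Y = X * Q :=
  exists_indefinite_orthogonal_of_eq_general J X Y heq hH hpos hneg
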